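/- arXiv:nlin/0405007 — 2 statements merged into one kernel-verified Lean document; each statement's English description precedes it below -/
import Mathlib

section
/- The Miura transformation M(v) = v_x + 2v² is a bijection from V := {v = (1/2)x^{-1} + v_1 x + ∑_{k≥3} v_k x^k} onto W := {w = w_0 + ∑_{k≥2} w_k x^k}: for each w ∈ W there is a unique v ∈ V with M(v) = w. -/
/-- Formal derivative on Laurent series: `(D q).coeff k = (k+1) * q.coeff (k+1)`. -/
noncomputable def D (q : LaurentSeries ℂ) : LaurentSeries ℂ :=
  HahnSeries.ofSuppBddBelow (fun k => ((k + 1 : ℤ) : ℂ) * q.coeff (k + 1))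
    (HahnSeries.forallLTEqZero_supp_BddBelow _ (q.order - 1) (fun m hm => by
      have h : m + 1 < q.order := by omega
      simp [HahnSeries.coeff_eq_zero_of_lt_order h]))

@[simp] lemma D_coeff (q : LaurentSeries ℂ) (k : ℤ) :
    (D q).coeff k = ((k + 1 : ℤ) : ℂ) * q.coeff (k + 1) := rfl

/-- The residue: coefficient of `x⁻¹`. -/
noncomputable def res (q : LaurentSeries ℂ) : ℂ := q.coeff (-1)

/-- `V`: series of the form `(1/2)x⁻¹ + v₁x + ∑_{k≥3} vₖ xᵏ`. -/
def memV (v : LaurentSeries ℂ) : Prop :=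
  v.coeff (-1) = 1/2 ∧ v.coeff 0 = 0 ∧ v.coeff 2 = 0 ∧ ∀ k < (-1 : ℤ), v.coeff k = 0

/-- `W`: series of the form `w₀ + ∑_{k≥2} wₖ xᵏ`. -/
def memW (w : LaurentSeries ℂ) : Prop :=
  w.coeff 1 = 0 ∧ ∀ k < (0 : ℤ), w.coeff k = 0

/-- `U`: series of the form `x⁻² + u₀ + ∑_{k≥2} uₖ xᵏ`. -/
def memU (u : LaurentSeries ℂ) : Prop :=
  u.coeff (-2) = 1 ∧ u.coeff (-1) = 0 ∧ u.coeff 1 = 0 ∧ ∀ k < (-2 : ℤ), u.coeff k = 0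

/-- The Miura transformation `M(v) = v_x + 2v²`. -/
noncomputable def M (v : LaurentSeries ℂ) : LaurentSeries ℂ := D v + 2 * v ^ 2

/-- The composition `M ∘ R` of Miura with the reflection `R(v) = -v`:
`(M∘R)(v) = -v_x + 2v²`. -/
noncomputable def MR (v : LaurentSeries ℂ) : LaurentSeries ℂ := -(D v) + 2 * v ^ 2

set_option linter.unnecessarySeqFocus false

lemma mul_coeff_Icc (a b : LaurentSeries ℂ)
    (ha : ∀ k < (-1 : ℤ), a.coeff k = 0) (hb : ∀ k < (-1 : ℤ), b.coeff k = 0) (n : ℤ) :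
    (a * b).coeff n = ∑ i ∈ Finset.Icc (-1 : ℤ) (n + 1), a.coeff i * b.coeff (n - i) := by
  have hinj : Function.Injective (fun i : ℤ => (i, n - i)) := by
    intro x y h; simpa using congrArg Prod.fst h
  rw [HahnSeries.coeff_mul]
  have hm := Finset.sum_map (Finset.Icc (-1 : ℤ) (n + 1)) ⟨fun i => (i, n - i), hinj⟩
    (fun ij => a.coeff ij.1 * b.coeff ij.2)
  simp only [Function.Embedding.coeFn_mk] at hm
  rw [← hm]
  apply Finset.sum_subset
  · intro ij hij
    obtain ⟨h1, h2, h3⟩ := Finset.mem_addAntidiagonal.mp hij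
    simp only [Finset.mem_map, Function.Embedding.coeFn_mk, Finset.mem_Icc]
    refine ⟨ij.1, ⟨?_, ?_⟩, ?_⟩
    · by_contra hc; exact h1 (by simp [ha ij.1 (by omega)])
    · have hb2 : ¬ ij.2 < -1 := fun hc => h2 (by simp [hb ij.2 hc])
      omega
    · ext <;> simp <;> omega
  · intro ij hij hnot
    obtain ⟨i, hi, rfl⟩ := Finset.mem_map.mp hij
    by_cases h1 : a.coeff i = 0
    · simp [h1]
    by_cases h2 : b.coeff (n - i) = 0
    · simp [h2]
    exfalso; exact hnot (Finset.mem_addAntidiagonal.mpr ⟨h1, h2, by simp⟩)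

lemma Mcoeff (v : LaurentSeries ℂ) (hlow : ∀ k < (-1 : ℤ), v.coeff k = 0) (n : ℤ) :
    (M v).coeff n = ((n + 1 : ℤ) : ℂ) * v.coeff (n + 1)
      + 2 * ∑ i ∈ Finset.Icc (-1 : ℤ) (n + 1), v.coeff i * v.coeff (n - i) := by
  show (D v + 2 * v ^ 2).coeff n = _
  rw [HahnSeries.coeff_add, D_coeff]
  congr 1
  rw [sq, two_mul, HahnSeries.coeff_add, mul_coeff_Icc v v hlow hlow]
  ring

lemma Mcoeff_ge (v : LaurentSeries ℂ) (hlow : ∀ k < (-1 : ℤ), v.coeff k = 0)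
    (hres : v.coeff (-1) = 1/2) (n : ℤ) (hn : -1 ≤ n) :
    (M v).coeff n = ((n : ℤ) + 3 : ℂ) * v.coeff (n + 1)
      + 2 * ∑ i ∈ Finset.Icc (0 : ℤ) n, v.coeff i * v.coeff (n - i) := by
  rw [Mcoeff v hlow n]
  have hsplit : Finset.Icc (-1 : ℤ) (n + 1)
      = insert (-1) (insert (n + 1) (Finset.Icc 0 n)) := by
    ext k; simp only [Finset.mem_Icc, Finset.mem_insert]; omega
  rw [hsplit, Finset.sum_insert (by simp only [Finset.mem_insert, Finset.mem_Icc]; omega),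
    Finset.sum_insert (by simp only [Finset.mem_Icc]; omega)]
  have h1 : n - (-1) = n + 1 := by ring
  have h2 : n - (n + 1) = -1 := by ring
  rw [h1, h2, hres]
  push_cast
  ring

lemma sum_Icc_eq_range (f : ℤ → ℂ) (j : ℕ) :
    ∑ i ∈ Finset.Icc (0 : ℤ) ((j : ℤ) - 1), f i = ∑ i ∈ Finset.range j, f i := by
  induction j with
  | zero => simp
  | succ j ih =>
    rw [Finset.sum_range_succ, ← ih]
    have h : ((j + 1 : ℕ) : ℤ) - 1 = (j : ℤ) := by push_cast; ring
    have hins : Finset.Icc (0 : ℤ) (j : ℤ) = insert (j : ℤ) (Finset.Icc 0 ((j : ℤ) - 1)) := by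
      ext k; simp only [Finset.mem_Icc, Finset.mem_insert]; omega
    rw [h, hins, Finset.sum_insert (by simp only [Finset.mem_Icc]; omega)]
    ring

/-- Key coefficient identity at `n = j - 1`. -/
lemma Mcoeff_nat (v : LaurentSeries ℂ) (hlow : ∀ k < (-1 : ℤ), v.coeff k = 0)
    (hres : v.coeff (-1) = 1/2) (j : ℕ) :
    (M v).coeff ((j : ℤ) - 1) = ((j : ℂ) + 2) * v.coeff (j : ℤ)
      + 2 * ∑ i ∈ Finset.range j, v.coeff (i : ℤ) * v.coeff ((j : ℤ) - 1 - (i : ℤ)) := by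
  have := Mcoeff_ge v hlow hres ((j : ℤ) - 1) (by omega)
  rw [this, sum_Icc_eq_range (fun i => v.coeff i * v.coeff ((j : ℤ) - 1 - i)) j]
  have h : ((j : ℤ) - 1) + 1 = (j : ℤ) := by ring
  rw [h]
  congr 1
  push_cast
  ring

noncomputable def cc (w : LaurentSeries ℂ) : ℕ → ℂ
  | 0 => 1/2
  | (j+1) => (w.coeff ((j : ℤ) - 1)
      - 2 * ∑ i ∈ (Finset.range j).attach, cc w (i.1 + 1) * cc w (j - i.1)) / ((j : ℂ) + 2)
decreasing_by
  · exact Nat.succ_lt_succ (Finset.mem_range.mp i.2)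
  · exact Nat.lt_succ_of_le (Nat.sub_le _ _)

lemma cc_zero (w : LaurentSeries ℂ) : cc w 0 = 1/2 := by rw [cc]

lemma cc_succ (w : LaurentSeries ℂ) (j : ℕ) :
    cc w (j + 1) = (w.coeff ((j : ℤ) - 1)
      - 2 * ∑ i ∈ Finset.range j, cc w (i + 1) * cc w (j - i)) / ((j : ℂ) + 2) := by
  rw [cc, ← Finset.sum_attach (Finset.range j) (fun i => cc w (i + 1) * cc w (j - i))]

noncomputable def vsol (w : LaurentSeries ℂ) : LaurentSeries ℂ :=
  HahnSeries.ofSuppBddBelow (fun k => if -1 ≤ k then cc w (k + 1).toNat else 0)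
    (HahnSeries.forallLTEqZero_supp_BddBelow _ (-1) (fun m hm => by
      simp only [if_neg (by omega : ¬ (-1 : ℤ) ≤ m)]))

lemma vsol_coeff (w : LaurentSeries ℂ) (k : ℤ) :
    (vsol w).coeff k = if -1 ≤ k then cc w (k + 1).toNat else 0 := rfl

lemma vsol_coeff_nat (w : LaurentSeries ℂ) (j : ℕ) :
    (vsol w).coeff ((j : ℤ) - 1) = cc w j := by
  rw [vsol_coeff, if_pos (by omega)]
  congr 1
  omega

lemma vsol_low (w : LaurentSeries ℂ) : ∀ k < (-1 : ℤ), (vsol w).coeff k = 0 := by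
  intro k hk
  rw [vsol_coeff, if_neg (by omega)]

lemma vsol_res (w : LaurentSeries ℂ) : (vsol w).coeff (-1) = 1/2 := by
  have := vsol_coeff_nat w 0
  simpa using this.trans (cc_zero w)

lemma cc_one (w : LaurentSeries ℂ) (hw : memW w) : cc w 1 = 0 := by
  rw [cc_succ]
  simp [hw.2 (-1) (by omega)]

lemma cc_three (w : LaurentSeries ℂ) (hw : memW w) : cc w 3 = 0 := by
  have h := cc_succ w 2
  rw [show ((2:ℕ):ℤ) - 1 = 1 by norm_num, hw.1] at h
  rw [show (3:ℕ) = 2 + 1 from rfl, h, Finset.sum_range_succ, Finset.sum_range_succ,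
    Finset.sum_range_zero]
  norm_num [cc_one w hw]

/-- Part 1: `M` maps `V` into `W`. -/
lemma part1 (v : LaurentSeries ℂ) (hv : memV v) : memW (M v) := by
  obtain ⟨h1, h2, h3, h4⟩ := hv
  constructor
  · rw [Mcoeff v h4 1]
    have : Finset.Icc (-1 : ℤ) (1 + 1) = ({-1, 0, 1, 2} : Finset ℤ) := by decide
    rw [this, Finset.sum_insert (by decide), Finset.sum_insert (by decide),
      Finset.sum_insert (by decide), Finset.sum_singleton]
    norm_num [h1, h2, h3]
  · intro k hk
    rcases lt_trichotomy k (-2) with hlt | heq | hgt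
    · rw [Mcoeff v h4 k]
      rw [h4 (k + 1) (by omega), Finset.Icc_eq_empty (by omega)]
      simp
    · subst heq
      rw [Mcoeff v h4 (-2)]
      rw [show (-2 : ℤ) + 1 = -1 by norm_num, h1,
        show Finset.Icc (-1 : ℤ) (-1) = {-1} from rfl, Finset.sum_singleton,
        show (-2 : ℤ) - (-1) = -1 by norm_num, h1]
      norm_num
    · have hk1 : k = -1 := by omega
      subst hk1
      rw [Mcoeff v h4 (-1)]
      rw [show (-1 : ℤ) + 1 = 0 by norm_num, h2]
      have : Finset.Icc (-1 : ℤ) 0 = ({-1, 0} : Finset ℤ) := by decide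
      rw [this, Finset.sum_insert (by decide), Finset.sum_singleton]
      norm_num [h1, h2]

lemma vsol_coeff_nat' (w : LaurentSeries ℂ) (j : ℕ) :
    (vsol w).coeff (j : ℤ) = cc w (j + 1) := by
  have h := vsol_coeff_nat w (j + 1)
  rwa [show ((j + 1 : ℕ) : ℤ) - 1 = (j : ℤ) by push_cast; ring] at h

lemma memV_vsol (w : LaurentSeries ℂ) (hw : memW w) : memV (vsol w) := by
  refine ⟨vsol_res w, ?_, ?_, vsol_low w⟩
  · have := vsol_coeff_nat' w 0
    simpa [cc_one w hw] using this
  · have := vsol_coeff_nat' w 2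
    simpa [cc_three w hw] using this

lemma nat_cast_ne (j : ℕ) : ((j : ℂ) + 2) ≠ 0 := by
  exact_mod_cast (by omega : (j : ℤ) + 2 ≠ 0)

lemma Mvsol (w : LaurentSeries ℂ) (hw : memW w) : M (vsol w) = w := by
  ext n
  rcases lt_trichotomy n (-2) with hlt | heq | hgt
  · rw [Mcoeff _ (vsol_low w) n, vsol_low w (n + 1) (by omega),
      Finset.Icc_eq_empty (by omega), hw.2 n (by omega)]
    simp
  · subst heq
    rw [Mcoeff _ (vsol_low w) (-2), show (-2 : ℤ) + 1 = -1 by norm_num, vsol_res,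
      show Finset.Icc (-1 : ℤ) (-1) = {-1} from rfl, Finset.sum_singleton,
      show (-2 : ℤ) - (-1) = -1 by norm_num, vsol_res, hw.2 (-2) (by omega)]
    norm_num
  · obtain ⟨j, rfl⟩ : ∃ j : ℕ, n = (j : ℤ) - 1 := ⟨(n + 1).toNat, by omega⟩
    rw [Mcoeff_nat (vsol w) (vsol_low w) (vsol_res w) j]
    have hsum : ∑ i ∈ Finset.range j, (vsol w).coeff (i : ℤ) *
          (vsol w).coeff ((j : ℤ) - 1 - (i : ℤ))
        = ∑ i ∈ Finset.range j, cc w (i + 1) * cc w (j - i) := by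
      apply Finset.sum_congr rfl
      intro i hi
      have hij := Finset.mem_range.mp hi
      rw [vsol_coeff_nat' w i]
      congr 1
      rw [show (j : ℤ) - 1 - (i : ℤ) = ((j - i : ℕ) : ℤ) - 1 by omega, vsol_coeff_nat w (j - i)]
    rw [vsol_coeff_nat' w j, hsum, cc_succ w j, mul_comm ((j : ℂ) + 2),
      div_mul_cancel₀ _ (nat_cast_ne j)]
    ring

lemma coeff_eq (w v : LaurentSeries ℂ) (h1 : v.coeff (-1) = 1/2)
    (h4 : ∀ k < (-1 : ℤ), v.coeff k = 0) (hM : M v = w) :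
    ∀ j : ℕ, v.coeff ((j : ℤ) - 1) = cc w j := by
  intro j
  induction j using Nat.strong_induction_on with
  | _ j ih =>
    match j with
    | 0 => simpa [cc_zero w] using h1
    | (m + 1) =>
      have heq := Mcoeff_nat v h4 h1 m
      rw [hM] at heq
      have hsum : ∑ i ∈ Finset.range m, v.coeff (i : ℤ) * v.coeff ((m : ℤ) - 1 - (i : ℤ))
          = ∑ i ∈ Finset.range m, cc w (i + 1) * cc w (m - i) := by
        apply Finset.sum_congr rfl
        intro i hi
        have hij := Finset.mem_range.mp hi
        have e1 : v.coeff (i : ℤ) = cc w (i + 1) := by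
          have := ih (i + 1) (by omega)
          rwa [show ((i + 1 : ℕ) : ℤ) - 1 = (i : ℤ) by push_cast; ring] at this
        have e2 : v.coeff ((m : ℤ) - 1 - (i : ℤ)) = cc w (m - i) := by
          have := ih (m - i) (by omega)
          rwa [show ((m - i : ℕ) : ℤ) - 1 = (m : ℤ) - 1 - (i : ℤ) by omega] at this
        rw [e1, e2]
      rw [show ((m + 1 : ℕ) : ℤ) - 1 = (m : ℤ) by push_cast; ring, cc_succ w m, ← hsum, heq,
        add_sub_cancel_right, mul_comm ((m : ℂ) + 2), mul_div_assoc]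
      rw [div_self (nat_cast_ne m), mul_one]

/-- The Miura transformation is a bijection from `V` onto `W`. -/
theorem stmt5 :
    (∀ v : LaurentSeries ℂ, memV v → memW (M v)) ∧
    (∀ w : LaurentSeries ℂ, memW w → ∃! v : LaurentSeries ℂ, memV v ∧ M v = w) := by
  refine ⟨part1, fun w hw => ⟨vsol w, ⟨memV_vsol w hw, Mvsol w hw⟩, ?_⟩⟩
  rintro v ⟨⟨h1, h2, h3, h4⟩, hM⟩
  ext n
  rcases lt_or_ge n (-1) with hn | hn
  · rw [h4 n hn, vsol_low w n hn]
  · obtain ⟨j, rfl⟩ : ∃ j : ℕ, n = (j : ℤ) - 1 := ⟨(n + 1).toNat, by omega⟩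
    rw [coeff_eq w v h1 h4 hM j, vsol_coeff_nat w j]
end

section
/- The unique v ∈ V with -v_x + 2v² = u (for u = x^{-2} + u_0 + ∑_{k≥2} u_k x^k) satisfies v_1 = u_0, v_3 = 2u_0² - u_2, v_4 = -(1/2)u_3, v_5 = (8/3)u_0³ - (4/3)u_0 u_2 - (1/3)u_4, and v_6 = -(1/2)u_0 u_3 - (1/4)u_5. -/
open Finset

theorem LaurentSeries.coeff_mul_eq_sum_Icc {R : Type*} [Semiring R] (x y : LaurentSeries R)
    {a b : ℤ} (hx : ∀ i < a, x.coeff i = 0) (hy : ∀ j < b, y.coeff j = 0) (n : ℤ) :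
    (x * y).coeff n = ∑ i ∈ Icc a (n - b), x.coeff i * y.coeff (n - i) := by
  rw [HahnSeries.coeff_mul]
  refine sum_bij_ne_zero (fun ij _ _ => ij.1) ?_ ?_ ?_ ?_
  · intro ij hij hne
    have hsum := (mem_antidiagonal.1 hij).2.2
    simp only [mem_Icc]
    constructor
    · by_contra! h
      exact left_ne_zero_of_mul hne (hx _ h)
    · by_contra! h
      exact right_ne_zero_of_mul hne (hy _ (by omega))
  · intro ij hij _ kl hkl _ h
    have := (mem_antidiagonal.1 hij).2.2
    have := (mem_antidiagonal.1 hkl).2.2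
    exact Prod.ext h (by omega)
  · intro i _ hne
    refine ⟨(i, n - i), mem_antidiagonal.2 ⟨?_, ?_, by simp⟩, hne, rfl⟩
    · exact (HahnSeries.mem_support _ _).2 (left_ne_zero_of_mul hne)
    · exact (HahnSeries.mem_support _ _).2 (right_ne_zero_of_mul hne)
  · intro ij hij _
    rw [show ij.2 = n - ij.1 by have := (mem_antidiagonal.1 hij).2.2; omega]

lemma coeff_MR (v : LaurentSeries ℂ) (n : ℤ) :
    (MR v).coeff n = -((n + 1 : ℤ) * v.coeff (n + 1)) + 2 * (v * v).coeff n := by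
  simp only [MR, HahnSeries.coeff_add, HahnSeries.coeff_neg, D_coeff, pow_two, two_mul]

lemma coeff_MR_of_residue (v : LaurentSeries ℂ) (hres : v.coeff (-1) = 1 / 2)
    (hlow : ∀ k < (-1 : ℤ), v.coeff k = 0) {n : ℤ} (hn : -1 ≤ n) :
    (MR v).coeff n =
      (1 - n) * v.coeff (n + 1) + 2 * ∑ i ∈ Icc 0 n, v.coeff i * v.coeff (n - i) := by
  have hIcc : Icc (-1) (n - -1) = insert (-1) (insert (n + 1) (Icc 0 n)) := by
    ext i; simp only [mem_Icc, mem_insert]; omega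
  have h_top : n + 1 ∉ Icc 0 n := by simp
  have h_bot : (-1 : ℤ) ∉ insert (n + 1) (Icc 0 n) := by simp only [mem_insert, mem_Icc]; omega
  rw [coeff_MR, LaurentSeries.coeff_mul_eq_sum_Icc v v hlow hlow, hIcc,
    sum_insert h_bot, sum_insert h_top, sub_neg_eq_add, show n - (n + 1) = -1 by ring, hres]
  push_cast
  ring

theorem stmt10_general (u v : LaurentSeries ℂ) (hv : memV v) (h : MR v = u) :
    v.coeff 1 = u.coeff 0 ∧
    v.coeff 3 = 2 * (u.coeff 0) ^ 2 - u.coeff 2 ∧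
    v.coeff 4 = -(1/2) * u.coeff 3 ∧
    v.coeff 5 = (8/3) * (u.coeff 0) ^ 3 - (4/3) * u.coeff 0 * u.coeff 2 - (1/3) * u.coeff 4 ∧
    v.coeff 6 = -(1/2) * u.coeff 0 * u.coeff 3 - (1/4) * u.coeff 5 := by
  obtain ⟨hres, hv0, hv2, hlow⟩ := hv
  have e0 := h ▸ coeff_MR_of_residue v hres hlow (n := 0) (by norm_num)
  have e2 := h ▸ coeff_MR_of_residue v hres hlow (n := 2) (by norm_num)
  have e3 := h ▸ coeff_MR_of_residue v hres hlow (n := 3) (by norm_num)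
  have e4 := h ▸ coeff_MR_of_residue v hres hlow (n := 4) (by norm_num)
  have e5 := h ▸ coeff_MR_of_residue v hres hlow (n := 5) (by norm_num)
  simp only [Icc_ofNat_ofNat] at e0 e2 e3 e4 e5
  norm_num [hv0, hv2] at e0 e2 e3 e4 e5
  have h1 : v.coeff 1 = u.coeff 0 := by linear_combination -e0
  have h3 : v.coeff 3 = 2 * (u.coeff 0) ^ 2 - u.coeff 2 := by
    linear_combination e2 + (2 * v.coeff 1 + 2 * u.coeff 0) * h1
  have h4 : v.coeff 4 = -(1/2) * u.coeff 3 := by linear_combination (1/2) * e3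
  refine ⟨h1, h3, h4, ?_, ?_⟩
  · linear_combination (1/3) * e4 + (4/3 * v.coeff 3) * h1 + (4/3 * u.coeff 0) * h3
  · linear_combination (1/4) * e5 + v.coeff 4 * h1 + u.coeff 0 * h4

/-- First coefficients of the solution `v ∈ V` of `-v_x + 2v² = u`, `u ∈ U`. -/
theorem stmt10 (u v : LaurentSeries ℂ) (hu : memU u) (hv : memV v) (h : MR v = u) :
    v.coeff 1 = u.coeff 0 ∧
    v.coeff 3 = 2 * (u.coeff 0) ^ 2 - u.coeff 2 ∧
    v.coeff 4 = -(1/2) * u.coeff 3 ∧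
    v.coeff 5 = (8/3) * (u.coeff 0) ^ 3 - (4/3) * u.coeff 0 * u.coeff 2 - (1/3) * u.coeff 4 ∧
    v.coeff 6 = -(1/2) * u.coeff 0 * u.coeff 3 - (1/4) * u.coeff 5 :=
  stmt10_general u v hv h
end
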